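/- Every planar simple graph on 5 vertices that contains no subgraph isomorphic to the Theta graph on 5 vertices (a 5-cycle plus a chord) has at most 7 edges. -/

import Mathlib

open SimpleGraph

/-- `G` has a planar embedding (drawing in the plane): vertices are mapped to distinct
points of `ℝ²`, each edge `uv` is drawn as a simple continuous arc from the point of `u`
to the point of `v`, arcs traversed in opposite directions coincide, the interior of an
arc passes through no vertex point, and the interiors of arcs of distinct edges are
disjoint. -/
def SimpleGraph.HasPlanarEmbedding {V : Type*} (G : SimpleGraph V) : Prop :=
  ∃ (pos : V → ℝ × ℝ) (arc : V → V → ℝ → ℝ × ℝ),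
    Function.Injective pos ∧
    (∀ u v : V, G.Adj u v →
      ContinuousOn (arc u v) (Set.Icc (0 : ℝ) 1) ∧
      Set.InjOn (arc u v) (Set.Icc (0 : ℝ) 1) ∧
      arc u v 0 = pos u ∧
      arc u v 1 = pos v ∧
      (∀ t : ℝ, arc u v t = arc v u (1 - t)) ∧
      (∀ w : V, ∀ t ∈ Set.Ioo (0 : ℝ) 1, arc u v t ≠ pos w)) ∧
    (∀ u v x y : V, G.Adj u v → G.Adj x y → s(u, v) ≠ s(x, y) →
      ∀ t₁ ∈ Set.Ioo (0 : ℝ) 1, ∀ t₂ ∈ Set.Ioo (0 : ℝ) 1, arc u v t₁ ≠ arc x y t₂)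

/-- `G` contains a subgraph isomorphic to `F`, i.e. there is an injective graph
homomorphism from `F` to `G`. -/
def ContainsCopy {α β : Type*} (F : SimpleGraph α) (G : SimpleGraph β) : Prop :=
  ∃ f : F →g G, Function.Injective f

/-- The Theta graph on 4 vertices: the 4-cycle 0-1-2-3-0 plus the chord 02,
i.e. `K₄` minus one edge. -/
def theta4 : SimpleGraph (Fin 4) :=
  SimpleGraph.fromEdgeSet {s(0, 1), s(1, 2), s(2, 3), s(0, 3), s(0, 2)}

/-- The Theta graph on 5 vertices: the 5-cycle 0-1-2-3-4-0 plus the chord 02. -/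
def theta5 : SimpleGraph (Fin 5) :=
  SimpleGraph.fromEdgeSet {s(0, 1), s(1, 2), s(2, 3), s(3, 4), s(0, 4), s(0, 2)}

/-- The cycle on 6 vertices: 0-1-2-3-4-5-0. -/
def cycle6 : SimpleGraph (Fin 6) :=
  SimpleGraph.fromEdgeSet {s(0, 1), s(1, 2), s(2, 3), s(3, 4), s(4, 5), s(0, 5)}

/-- `G` contains no member of `Θ₆` as a subgraph: for each pair of distinct
non-consecutive vertices `a`, `b` of the 6-cycle, `G` contains no copy of the Theta
graph obtained from the 6-cycle by adding the chord `ab`. -/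
def Theta6Free {β : Type*} (G : SimpleGraph β) : Prop :=
  ∀ a b : Fin 6, a ≠ b → ¬ cycle6.Adj a b →
    ¬ ContainsCopy (cycle6 ⊔ SimpleGraph.fromEdgeSet {s(a, b)}) G

/-- `K₅⁻`: the complete graph on 5 vertices minus one edge. -/
def K5minus : SimpleGraph (Fin 5) :=
  (⊤ : SimpleGraph (Fin 5)).deleteEdges {s(0, 1)}

/-!
The complement of `theta5` in `K₅` is the Hamiltonian path `2-4-1-3-0`, and any graph with at
most two edges on five vertices is contained in a Hamiltonian path. Hence `K₅` minus any two
edges contains a copy of `theta5`, which a finite search over the permutations of `Fin 5`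
confirms. A graph on five vertices with at least eight of the ten possible edges contains such
a copy, so a `theta5`-free one has at most seven edges.
-/

theorem containsCopy_iff_isContained {α β : Type*} {F : SimpleGraph α} {G : SimpleGraph β} :
    ContainsCopy F G ↔ F ⊑ G :=
  ⟨fun ⟨f, hf⟩ ↦ ⟨⟨f, hf⟩⟩, fun ⟨f⟩ ↦ ⟨f.toHom, f.injective⟩⟩

theorem Finset.exists_subset_pair_of_card_le_two {α : Type*} [DecidableEq α] [Nonempty α]
    {s : Finset α} (hs : s.card ≤ 2) : ∃ a b, s ⊆ {a, b} := by
  obtain h | h | h : s.card = 0 ∨ s.card = 1 ∨ s.card = 2 := by omega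
  · obtain ⟨a⟩ := ‹Nonempty α›
    exact ⟨a, a, by simp [Finset.card_eq_zero.mp h]⟩
  · obtain ⟨a, rfl⟩ := Finset.card_eq_one.mp h
    exact ⟨a, a, by simp⟩
  · obtain ⟨a, b, -, rfl⟩ := Finset.card_eq_two.mp h
    exact ⟨a, b, subset_rfl⟩

theorem SimpleGraph.exists_top_deleteEdges_pair_le {V : Type*} [Fintype V] [DecidableEq V]
    [Nonempty V] (G : SimpleGraph V) [DecidableRel G.Adj]
    (hG : (Fintype.card V).choose 2 ≤ G.edgeFinset.card + 2) :
    ∃ e₁ e₂ : Sym2 V, (⊤ : SimpleGraph V).deleteEdges {e₁, e₂} ≤ G := by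
  have hmissing : ((⊤ : SimpleGraph V).edgeFinset \ G.edgeFinset).card ≤ 2 := by
    rw [Finset.card_sdiff_of_subset (edgeFinset_mono le_top), card_edgeFinset_top_eq_card_choose_two]
    omega
  obtain ⟨v⟩ := ‹Nonempty V›
  have : Nonempty (Sym2 V) := ⟨s(v, v)⟩
  obtain ⟨e₁, e₂, hsub⟩ := Finset.exists_subset_pair_of_card_le_two hmissing
  refine ⟨e₁, e₂, fun a b ⟨hab, hne⟩ ↦ ?_⟩
  by_contra hnadj
  have hmem : s(a, b) ∈ (⊤ : SimpleGraph V).edgeFinset \ G.edgeFinset := by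
    simpa using ⟨hab, hnadj⟩
  exact hne ⟨by simpa using hsub hmem, hab⟩

instance : DecidableRel theta5.Adj :=
  inferInstanceAs (DecidableRel (fromEdgeSet _).Adj)

set_option maxRecDepth 100000 in
theorem exists_perm_theta5_avoid_pair : ∀ e₁ e₂ : Sym2 (Fin 5), ∃ σ : Equiv.Perm (Fin 5),
    ∀ a b, theta5.Adj a b → s(σ a, σ b) ≠ e₁ ∧ s(σ a, σ b) ≠ e₂ := by
  decide

theorem theta5_isContained_top_deleteEdges_pair (e₁ e₂ : Sym2 (Fin 5)) :
    theta5 ⊑ (⊤ : SimpleGraph (Fin 5)).deleteEdges {e₁, e₂} := by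
  obtain ⟨σ, hσ⟩ := exists_perm_theta5_avoid_pair e₁ e₂
  refine ⟨⟨⟨σ, fun {a b} hab ↦ ?_⟩, σ.injective⟩⟩
  simpa [σ.injective.ne hab.ne] using hσ a b hab

theorem theta5_free_five_vertices_general
    (V : Type*) [Fintype V] (G : SimpleGraph V) (hcard : Fintype.card V = 5)
    (hfree : ¬ ContainsCopy theta5 G) :
    G.edgeSet.ncard ≤ 7 := by
  classical
  by_contra! hG
  let G₅ := G.overFin hcard
  have iso : G ≃g G₅ := G.overFinIso hcard
  have hcount : (Fintype.card (Fin 5)).choose 2 ≤ G₅.edgeFinset.card + 2 := by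
    rw [← iso.card_edgeFinset_eq, ← Set.ncard_coe_finset, coe_edgeFinset, Fintype.card_fin, show (5 : ℕ).choose 2 = 10 from rfl]
    omega
  obtain ⟨e₁, e₂, hle⟩ := G₅.exists_top_deleteEdges_pair_le hcount
  exact hfree <| containsCopy_iff_isContained.mpr <|
    ((theta5_isContained_top_deleteEdges_pair e₁ e₂).mono_right hle).trans iso.symm.isContained

/-- Every planar simple graph on 5 vertices containing no copy of the Theta graph on
5 vertices has at most 7 edges. -/
theorem theta5_free_five_vertices
    (V : Type*) [Fintype V] (G : SimpleGraph V) (hcard : Fintype.card V = 5)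
    (hplanar : G.HasPlanarEmbedding) (hfree : ¬ ContainsCopy theta5 G) :
    G.edgeSet.ncard ≤ 7 :=
  theta5_free_five_vertices_general V G hcard hfree
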